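/- arXiv:1811.02088 — 3 statements merged into one kernel-verified Lean document; each statement's English description precedes it below -/
import Mathlib

section
/- The numerical range of a linear operator on a complex inner product space is a convex subset of the complex numbers. That is, if A : D → H is a linear map defined on a subspace D of a complex inner product space H, then the set ν(A) = { ⟨Ax, x⟩ : x ∈ D, ‖x‖ = 1 } is convex. -/
/-!
After replacing `A` by `conj α • A + conj β • id`, which moves the numerical range by the affine
map `z ↦ α z + β`, it suffices to show that `[0, 1]` lies in the numerical range whenever `0` and
`1` do. Take unit vectors `x`, `y` with `⟪Ax, x⟫ = 0` and `⟪Ay, y⟫ = 1`, and rotate `y` by a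
unimodular `ω` making the cross term `ω ⟪Ax, y⟫ + conj ω ⟪Ay, x⟫` real. Then `⟪Au, u⟫` is real
along `u s = (1 - s) x + s ω y`, the path avoids `0` because `x` and `y` are independent, and the
intermediate value theorem applied to `⟪Au, u⟫ / ‖u‖²` on `[0, 1]` hits every `t ∈ [0, 1]`.
-/

open Set ComplexConjugate
open scoped InnerProductSpace

theorem Complex.exists_norm_eq_one_im_mul_eq_zero (w : ℂ) :
    ∃ ω : ℂ, ‖ω‖ = 1 ∧ (ω * w).im = 0 := by
  refine ⟨exp (-(arg w * I)), by simpa using norm_exp_ofReal_mul_I (-arg w), ?_⟩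
  calc (exp (-(arg w * I)) * w).im = (exp (-(arg w * I)) * (‖w‖ * exp (arg w * I))).im := by
        rw [norm_mul_exp_arg_mul_I]
    _ = 0 := by rw [mul_left_comm, ← exp_add, neg_add_cancel, exp_zero, mul_one, ofReal_im]

theorem Complex.exists_norm_eq_one_im_mul_add_conj_mul_eq_zero (a b : ℂ) :
    ∃ ω : ℂ, ‖ω‖ = 1 ∧ (ω * a + conj ω * b).im = 0 := by
  obtain ⟨ω, hω, him⟩ := exists_norm_eq_one_im_mul_eq_zero (a - conj b)
  refine ⟨ω, hω, ?_⟩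
  simp only [mul_sub, sub_im, mul_im, conj_re, conj_im] at him
  simp only [add_im, mul_im, conj_re, conj_im]
  linarith

namespace LinearMap

variable {H : Type*} [NormedAddCommGroup H] [InnerProductSpace ℂ H] {D : Submodule ℂ H}

def numericalRange (A : D →ₗ[ℂ] H) : Set ℂ :=
  {c | ∃ x : D, ‖(x : H)‖ = 1 ∧ ⟪A x, (x : H)⟫_ℂ = c}

variable (A : D →ₗ[ℂ] H)

theorem inner_map_smul_self (c : ℂ) (x : D) :
    ⟪A (c • x), ((c • x : D) : H)⟫_ℂ = ‖c‖ ^ 2 * ⟪A x, (x : H)⟫_ℂ := by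
  rw [map_smul, Submodule.coe_smul, inner_smul_left, inner_smul_right, ← mul_assoc,
    Complex.conj_mul']

theorem inner_map_self_div_norm_sq_mem_numericalRange {x : D} (hx : x ≠ 0) :
    ⟪A x, (x : H)⟫_ℂ / (‖(x : H)‖ ^ 2 : ℝ) ∈ numericalRange A := by
  have hx' : ‖(x : H)‖ ≠ 0 := norm_ne_zero_iff.2 (by simpa using hx)
  refine ⟨((‖(x : H)‖⁻¹ : ℝ) : ℂ) • x, ?_, ?_⟩
  · rw [Submodule.coe_smul, norm_smul, Complex.norm_real, norm_inv, norm_norm,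
      inv_mul_cancel₀ hx']
  · rw [inner_map_smul_self, Complex.norm_real, norm_inv, norm_norm]
    push_cast
    ring

theorem numericalRange_smul_add_smul_subtype (α β : ℂ) :
    numericalRange (conj α • A + conj β • D.subtype) =
      (fun z => α * z + β) '' numericalRange A := by
  have hunit : ∀ x : D, ‖(x : H)‖ = 1 →
      ⟪(conj α • A + conj β • D.subtype) x, (x : H)⟫_ℂ = α * ⟪A x, (x : H)⟫_ℂ + β := by
    intro x hx
    simp [inner_self_eq_norm_sq_to_K, hx, mul_comm]
  ext c
  constructor
  · rintro ⟨x, hx, rfl⟩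
    exact ⟨_, ⟨x, hx, rfl⟩, (hunit x hx).symm⟩
  · rintro ⟨_, ⟨x, hx, rfl⟩, rfl⟩
    exact ⟨x, hx, hunit x hx⟩

theorem linearIndependent_pair_of_inner_map_self {x y : D} (hx : x ≠ 0)
    (hqx : ⟪A x, (x : H)⟫_ℂ = 0) (hqy : ⟪A y, (y : H)⟫_ℂ ≠ 0) :
    LinearIndependent ℂ ![x, y] := by
  refine (LinearIndependent.pair_iff' hx).2 fun c hc => hqy ?_
  rw [← hc, inner_map_smul_self, hqx, mul_zero]

theorem ofReal_mem_numericalRange_of_zero_mem_of_one_mem (h0 : 0 ∈ numericalRange A)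
    (h1 : 1 ∈ numericalRange A) {t : ℝ} (ht : t ∈ Icc 0 1) : (t : ℂ) ∈ numericalRange A := by
  obtain ⟨x, hx, hqx⟩ := h0
  obtain ⟨y, hy, hqy⟩ := h1
  obtain ⟨ω, hω, him⟩ := Complex.exists_norm_eq_one_im_mul_add_conj_mul_eq_zero
    ⟪A x, (y : H)⟫_ℂ ⟪A y, (x : H)⟫_ℂ
  set r := (ω * ⟪A x, (y : H)⟫_ℂ + conj ω * ⟪A y, (x : H)⟫_ℂ).re
  let u : ℝ → D := fun s => (1 - s : ℂ) • x + (s * ω : ℂ) • y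
  have hu : ∀ s, u s ≠ 0 := by
    have hxy : LinearIndependent ℂ ![x, y] :=
      linearIndependent_pair_of_inner_map_self A (by rintro rfl; simp at hx) hqx (by simp [hqy])
    intro s hs
    obtain ⟨h1s, hsω⟩ := LinearIndependent.pair_iff.1 hxy _ _ hs
    rw [sub_eq_zero] at h1s
    simp [← h1s] at hsω
    simp [hsω] at hω
  have hq : ∀ s : ℝ, ⟪A (u s), (u s : H)⟫_ℂ = ((s ^ 2 + s * (1 - s) * r : ℝ) : ℂ) := by
    intro s
    have hr : ω * ⟪A x, (y : H)⟫_ℂ + conj ω * ⟪A y, (x : H)⟫_ℂ = r :=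
      Complex.ext rfl (by simpa using him)
    have hωω : ω * conj ω = 1 := by rw [Complex.mul_conj', hω, Complex.ofReal_one, one_pow]
    simp only [u, map_add, map_smul, Submodule.coe_add, Submodule.coe_smul, inner_add_left,
      inner_add_right, inner_smul_left, inner_smul_right, hqx, hqy, map_sub, map_one,
      map_mul, Complex.conj_ofReal]
    push_cast
    linear_combination (s : ℂ) * (1 - s) * hr + (s : ℂ) ^ 2 * hωω
  -- `A` need not be continuous, so `f` is written through the closed form `hq`.
  let f : ℝ → ℝ := fun s => (s ^ 2 + s * (1 - s) * r) / ‖(u s : H)‖ ^ 2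
  have hf : Continuous f := by
    refine Continuous.div (by fun_prop) (by fun_prop) fun s => pow_ne_zero 2 ?_
    simpa using hu s
  have hf0 : f 0 = 0 := by simp [f]
  have hf1 : f 1 = 1 := by simp [f, u, norm_smul, hω, hy]
  obtain ⟨s, -, hs⟩ := intermediate_value_Icc zero_le_one hf.continuousOn (hf0 ▸ hf1 ▸ ht)
  convert inner_map_self_div_norm_sq_mem_numericalRange A (hu s) using 1
  rw [hq, ← hs]
  simp only [f]
  push_cast
  rfl

theorem convex_numericalRange : Convex ℝ (numericalRange A) := by
  refine convex_iff_segment_subset.2 fun p hp q hq => ?_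
  rcases eq_or_ne p q with rfl | hpq
  · simpa using hp
  have hqp : q - p ≠ 0 := sub_ne_zero.2 hpq.symm
  have hB := numericalRange_smul_add_smul_subtype A (q - p)⁻¹ (-(p / (q - p)))
  have h0 : 0 ∈ numericalRange (conj (q - p)⁻¹ • A + conj (-(p / (q - p))) • D.subtype) :=
    hB ▸ ⟨p, hp, by ring⟩
  have h1 : 1 ∈ numericalRange (conj (q - p)⁻¹ • A + conj (-(p / (q - p))) • D.subtype) :=
    hB ▸ ⟨q, hq, by field_simp; ring⟩
  rw [segment_eq_image_lineMap]
  rintro _ ⟨t, ht, rfl⟩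
  obtain ⟨z, hz, hzt⟩ := hB ▸ ofReal_mem_numericalRange_of_zero_mem_of_one_mem _ h0 h1 ht
  convert hz
  field_simp at hzt
  rw [AffineMap.lineMap_apply_module, Complex.real_smul, Complex.real_smul]
  push_cast
  linear_combination -hzt

end LinearMap

/-- **Toeplitz–Hausdorff theorem.** The numerical range
`ν(A) = { ⟨Ax, x⟩ : x ∈ D, ‖x‖ = 1 }` of a linear operator `A : D → H` defined on a
subspace `D` of a complex inner product space `H` is a convex subset of `ℂ`. -/
theorem stmt_0 {H : Type*} [NormedAddCommGroup H] [InnerProductSpace ℂ H]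
    (D : Submodule ℂ H) (A : D →ₗ[ℂ] H) :
    Convex ℝ {c : ℂ | ∃ x : D, ‖(x : H)‖ = 1 ∧ (inner ℂ (A x) (x : H) : ℂ) = c} :=
  A.convex_numericalRange
end

section
/- If A is a densely defined closed operator on a complex Hilbert space H, then the operator 1 + A*A is bijective from its domain onto H and its inverse is a bounded operator on H. -/
/-!
The graph of a closed operator `A` is a closed subspace of the Hilbert sum `H ⊕ H`, and its
orthogonal complement is `{(-A* y, y) : y ∈ D(A*)}`. Projecting `(h, 0)` onto the graph gives
`(x, A x)` with `(h - x, -A x)` orthogonal to the graph, i.e. `A x ∈ D(A*)` and `x + A* A x = h`.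
Hence `B h := x`, a bounded projection followed by a coordinate, is a right inverse of `1 + A* A`;
it is also a left inverse because the orthogonal decomposition of `(h, 0)` is unique.
-/

namespace LinearPMap

open WithLp

variable {𝕜 E F : Type*} [RCLike 𝕜]
variable [NormedAddCommGroup E] [InnerProductSpace 𝕜 E]
variable [NormedAddCommGroup F] [InnerProductSpace 𝕜 F]

def graphL2 (T : E →ₗ.[𝕜] F) : Submodule 𝕜 (WithLp 2 (E × F)) :=
  T.graph.comap (WithLp.linearEquiv 2 𝕜 (E × F)).toLinearMap

variable {T : E →ₗ.[𝕜] F}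

theorem toLp_mem_graphL2 (x : T.domain) : toLp 2 ((x : E), T x) ∈ T.graphL2 :=
  T.mem_graph x

theorem isClosed_graphL2 (hT : T.IsClosed) :
    _root_.IsClosed (T.graphL2 : Set (WithLp 2 (E × F))) :=
  hT.preimage (prod_continuous_ofLp 2 E F)

theorem exists_eq_toLp_of_mem_graphL2 {w : WithLp 2 (E × F)} (hw : w ∈ T.graphL2) :
    ∃ x : T.domain, w = toLp 2 ((x : E), T x) := by
  obtain ⟨x, hx⟩ := T.mem_graph_iff'.mp hw
  exact ⟨x, by rw [hx]; rfl⟩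

variable [CompleteSpace E]

theorem mem_orthogonal_graphL2_iff (hT : Dense (T.domain : Set E)) (w : WithLp 2 (E × F)) :
    w ∈ T.graphL2ᗮ ↔ (-(ofLp w).2, (ofLp w).1) ∈ T†.graph := by
  rw [adjoint_graph_eq_graph_adjoint hT, Submodule.mem_adjoint_iff, Submodule.mem_orthogonal]
  constructor
  · intro h a b hab
    have := h (toLp 2 (a, b)) hab
    rw [prod_inner_apply] at this
    simp only [inner_neg_right]
    linear_combination -this
  · intro h u hu
    have := h (ofLp u).1 (ofLp u).2 hu
    rw [prod_inner_apply]
    simp only [inner_neg_right] at this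
    linear_combination -this

theorem toLp_sub_mem_orthogonal_graphL2_iff (hT : Dense (T.domain : Set E)) (x : T.domain)
    (h : E) :
    toLp 2 (h, 0) - toLp 2 ((x : E), T x) ∈ T.graphL2ᗮ ↔
      ∃ hx : T x ∈ T†.domain, (x : E) + T† ⟨T x, hx⟩ = h := by
  rw [mem_orthogonal_graphL2_iff hT, mem_graph_iff]
  simp only [ofLp_sub, Prod.mk_sub_mk, zero_sub, neg_neg, eq_sub_iff_add_eq', Subtype.exists,
    exists_and_left, exists_eq_left]

theorem starProjection_graphL2_eq_iff [T.graphL2.HasOrthogonalProjection]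
    (hT : Dense (T.domain : Set E)) (x : T.domain) (h : E) :
    T.graphL2.starProjection (toLp 2 (h, 0)) = toLp 2 ((x : E), T x) ↔
      ∃ hx : T x ∈ T†.domain, (x : E) + T† ⟨T x, hx⟩ = h := by
  rw [← toLp_sub_mem_orthogonal_graphL2_iff hT]
  constructor
  · intro hP
    rw [← hP]
    exact T.graphL2.sub_starProjection_mem_orthogonal _
  · exact Submodule.eq_starProjection_of_mem_orthogonal (toLp_mem_graphL2 x)

end LinearPMap

open LinearPMap

/-- **(von Neumann.)** If `A` is a densely defined closed operator on a complex Hilbert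
space `H`, then `1 + A*A` (with its natural domain `{x ∈ D(A) : Ax ∈ D(A*)}`) is a
bijection onto `H` whose inverse is a bounded operator `B` on `H`. -/
theorem stmt_1 {H : Type*} [NormedAddCommGroup H] [InnerProductSpace ℂ H] [CompleteSpace H]
    (A : H →ₗ.[ℂ] H) (hdense : Dense (A.domain : Set H)) (hclosed : A.IsClosed) :
    ∃ B : H →L[ℂ] H,
      -- `B` is a right inverse: every `h ∈ H` is hit, and `(1 + A*A)(B h) = h`
      (∀ h : H, ∃ (hx : B h ∈ A.domain) (hAx : A ⟨B h, hx⟩ ∈ A.adjoint.domain),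
        B h + A.adjoint ⟨A ⟨B h, hx⟩, hAx⟩ = h) ∧
      -- `B` is a left inverse on the domain of `1 + A*A`, so `1 + A*A` is injective
      (∀ (x : A.domain) (hAx : A x ∈ A.adjoint.domain),
        B ((x : H) + A.adjoint ⟨A x, hAx⟩) = (x : H)) := by
  have : CompleteSpace A.graphL2 := (isClosed_graphL2 hclosed).completeSpace_coe
  set B : H →L[ℂ] H := WithLp.fstL 2 ℂ H H ∘L A.graphL2.starProjection ∘L
    (WithLp.prodContinuousLinearEquiv 2 ℂ H H).symm.toContinuousLinearMap ∘L
      ContinuousLinearMap.inl ℂ H H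
  have hB (h : H) (x : A.domain)
      (hx : A.graphL2.starProjection (WithLp.toLp 2 (h, 0)) = WithLp.toLp 2 ((x : H), A x)) :
      B h = x := by
    simp [B, hx]
  refine ⟨B, fun h => ?_, fun x hAx => ?_⟩
  · obtain ⟨x, hx⟩ := exists_eq_toLp_of_mem_graphL2
      (A.graphL2.starProjection_apply_mem (WithLp.toLp 2 (h, 0)))
    obtain ⟨hAx, hxh⟩ := (starProjection_graphL2_eq_iff hdense x h).1 hx
    rw [hB h x hx]
    exact ⟨x.2, hAx, hxh⟩
  · exact hB _ x ((starProjection_graphL2_eq_iff hdense x _).2 ⟨hAx, rfl⟩)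
end

section
/- Let A be a densely defined closed operator on a complex Hilbert space. A is m-dissipative if and only if the spectrum of A is contained in the closed left half-plane { λ : Re λ ≤ 0 } and ‖(λ − A)⁻¹‖ ≤ 1/Re λ for all λ with Re λ > 0. -/
/-! Dissipativity gives `Re λ ‖x‖ ≤ ‖(λ - A) x‖`, so once `λ - A` is onto its inverse is bounded
by `1 / Re λ`; a Neumann series then makes `μ - A` onto whenever `‖λ - μ‖ < Re λ`, and connectedness
of the right half-plane spreads this from `λ = 1` to every `Re λ > 0`. Conversely, the resolvent
bound at real `t > 0` gives `t² ‖x‖² ≤ ‖t x - A x‖² = t² ‖x‖² - 2 t Re⟨A x, x⟩ + ‖A x‖²`, which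
for large `t` forces `Re⟨A x, x⟩ ≤ 0`. -/

open Metric

namespace LinearPMap

section Banach

variable {𝕜 E : Type*} [NontriviallyNormedField 𝕜] [NormedAddCommGroup E] [NormedSpace 𝕜 E]

def scalarSub (A : E →ₗ.[𝕜] E) (lam : 𝕜) : A.domain →ₗ[𝕜] E :=
  lam • A.domain.subtype - A.toFun

theorem scalarSub_apply (A : E →ₗ.[𝕜] E) (lam : 𝕜) (x : A.domain) :
    A.scalarSub lam x = lam • (x : E) - A x :=
  rfl

theorem surjective_scalarSub_of_rightInverse [CompleteSpace E] {A : E →ₗ.[𝕜] E} {lam mu : 𝕜}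
    {R : E →L[𝕜] E} (hR : ∀ h : E, ∃ hx : R h ∈ A.domain, lam • R h - A ⟨R h, hx⟩ = h)
    (hsmall : ‖lam - mu‖ * ‖R‖ < 1) : Function.Surjective (A.scalarSub mu) := by
  intro y
  have hnorm : ‖(lam - mu) • R‖ < 1 := by rwa [norm_smul]
  set z := (↑(Units.oneSub _ hnorm)⁻¹ : E →L[𝕜] E) y
  have hz : z - (lam - mu) • R z = y := by
    have := congrArg (fun T : E →L[𝕜] E => T y) (Units.oneSub _ hnorm).mul_inv
    simpa [z] using this
  obtain ⟨hx, hRz⟩ := hR z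
  refine ⟨⟨R z, hx⟩, ?_⟩
  calc mu • R z - A ⟨R z, hx⟩ = (lam • R z - A ⟨R z, hx⟩) - (lam - mu) • R z := by
        rw [sub_smul]; abel
    _ = y := by rw [hRz, hz]

end Banach

section ComplexNormed

variable {E : Type*} [NormedAddCommGroup E] [NormedSpace ℂ E]

theorem re_mul_norm_le_of_leftInverse {A : E →ₗ.[ℂ] E} {lam : ℂ} {R : E →L[ℂ] E}
    (hR : ∀ x : A.domain, R (lam • (x : E) - A x) = x) (hRnorm : ‖R‖ ≤ 1 / lam.re)
    (hlam : 0 < lam.re) (x : A.domain) : lam.re * ‖(x : E)‖ ≤ ‖A.scalarSub lam x‖ :=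
  calc lam.re * ‖(x : E)‖ = lam.re * ‖R (A.scalarSub lam x)‖ := by rw [scalarSub_apply, hR]
    _ ≤ lam.re * (1 / lam.re * ‖A.scalarSub lam x‖) := by
        gcongr
        exact R.le_of_opNorm_le hRnorm _
    _ = ‖A.scalarSub lam x‖ := by field_simp

end ComplexNormed

section Hilbert

variable {H : Type*} [NormedAddCommGroup H] [InnerProductSpace ℂ H]

def IsDissipative (A : H →ₗ.[ℂ] H) : Prop :=
  ∀ x : A.domain, (inner ℂ (A x) (x : H)).re ≤ 0

theorem re_inner_scalarSub_self (A : H →ₗ.[ℂ] H) (lam : ℂ) (x : A.domain) :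
    (inner ℂ (A.scalarSub lam x) (x : H)).re
      = lam.re * ‖(x : H)‖ ^ 2 - (inner ℂ (A x) (x : H)).re := by
  rw [scalarSub_apply, inner_sub_left, inner_smul_left, inner_self_eq_norm_sq_to_K]
  simp [Complex.mul_re, ← Complex.ofReal_pow]

theorem IsDissipative.re_mul_norm_le {A : H →ₗ.[ℂ] H} (hA : A.IsDissipative) (lam : ℂ)
    (x : A.domain) : lam.re * ‖(x : H)‖ ≤ ‖A.scalarSub lam x‖ := by
  rcases (norm_nonneg (x : H)).eq_or_lt with hx | hx
  · rw [← hx, mul_zero]; exact norm_nonneg _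
  refine le_of_mul_le_mul_right ?_ hx
  calc lam.re * ‖(x : H)‖ * ‖(x : H)‖
      ≤ (inner ℂ (A.scalarSub lam x) (x : H)).re := by
        rw [re_inner_scalarSub_self]; nlinarith [hA x]
    _ ≤ ‖A.scalarSub lam x‖ * ‖(x : H)‖ := re_inner_le_norm (𝕜 := ℂ) _ _

theorem IsDissipative.injective_scalarSub {A : H →ₗ.[ℂ] H} (hA : A.IsDissipative) {lam : ℂ}
    (hlam : 0 < lam.re) : Function.Injective (A.scalarSub lam) := by
  refine (injective_iff_map_eq_zero _).2 fun x hx => ?_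
  have := hA.re_mul_norm_le lam x
  rw [hx, norm_zero] at this
  exact Subtype.ext (norm_le_zero_iff.1 (nonpos_of_mul_nonpos_right this hlam))

theorem IsDissipative.exists_resolvent {A : H →ₗ.[ℂ] H} (hA : A.IsDissipative) {lam : ℂ}
    (hlam : 0 < lam.re) (hsurj : Function.Surjective (A.scalarSub lam)) :
    ∃ R : H →L[ℂ] H,
      (∀ h : H, ∃ hx : R h ∈ A.domain, lam • R h - A ⟨R h, hx⟩ = h) ∧
      (∀ x : A.domain, R (lam • (x : H) - A x) = (x : H)) ∧
      ‖R‖ ≤ 1 / lam.re := by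
  let e := LinearEquiv.ofBijective _ ⟨hA.injective_scalarSub hlam, hsurj⟩
  have hbound (y : H) : ‖((e.symm y : A.domain) : H)‖ ≤ 1 / lam.re * ‖y‖ := by
    rw [one_div_mul_eq_div, le_div_iff₀' hlam]
    have hy : A.scalarSub lam (e.symm y) = y := e.apply_symm_apply y
    simpa only [hy] using hA.re_mul_norm_le lam (e.symm y)
  refine ⟨(A.domain.subtype ∘ₗ e.symm.toLinearMap).mkContinuous _ hbound, fun h => ?_,
    fun x => ?_, LinearMap.mkContinuous_norm_le _ (by positivity) hbound⟩
  · exact ⟨(e.symm h).2, e.apply_symm_apply h⟩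
  · exact congrArg Subtype.val (e.symm_apply_apply x)

theorem isDissipative_of_re_mul_norm_le {A : H →ₗ.[ℂ] H}
    (h : ∀ t : ℝ, 0 < t → ∀ x : A.domain, t * ‖(x : H)‖ ≤ ‖A.scalarSub t x‖) :
    A.IsDissipative := by
  intro x
  set r := (inner ℂ (A x) (x : H)).re
  have hsq (t : ℝ) (ht : 0 < t) : 2 * t * r ≤ ‖A x‖ ^ 2 := by
    have hle := pow_le_pow_left₀ (by positivity) (h t ht x) 2
    have hexp : ‖A.scalarSub t x‖ ^ 2 = t ^ 2 * ‖(x : H)‖ ^ 2 - 2 * t * r + ‖A x‖ ^ 2 := by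
      rw [scalarSub_apply, norm_sub_sq (𝕜 := ℂ), norm_smul, inner_smul_left, RCLike.re_to_complex,
        Complex.conj_ofReal, Complex.re_ofReal_mul, ← RCLike.re_to_complex, inner_re_symm]
      simp only [Complex.norm_real, Real.norm_eq_abs, mul_pow, sq_abs, RCLike.re_to_complex, r]
      ring
    nlinarith
  by_contra! hr
  have := hsq ((‖A x‖ ^ 2 + 1) / (2 * r)) (by positivity)
  rw [show 2 * ((‖A x‖ ^ 2 + 1) / (2 * r)) * r = ‖A x‖ ^ 2 + 1 by field_simp] at this
  linarith

variable [CompleteSpace H]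

theorem IsDissipative.surjective_scalarSub_of_norm_sub_lt {A : H →ₗ.[ℂ] H}
    (hA : A.IsDissipative) {lam mu : ℂ} (hsurj : Function.Surjective (A.scalarSub lam))
    (hmu : ‖lam - mu‖ < lam.re) : Function.Surjective (A.scalarSub mu) := by
  have hlam : 0 < lam.re := (norm_nonneg _).trans_lt hmu
  obtain ⟨R, hR, -, hRnorm⟩ := hA.exists_resolvent hlam hsurj
  refine surjective_scalarSub_of_rightInverse hR ?_
  calc ‖lam - mu‖ * ‖R‖ ≤ ‖lam - mu‖ * (1 / lam.re) := by gcongr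
    _ < lam.re * (1 / lam.re) := mul_lt_mul_of_pos_right hmu (by positivity)
    _ = 1 := by field_simp

theorem IsDissipative.surjective_scalarSub_of_re_pos {A : H →ₗ.[ℂ] H} (hA : A.IsDissipative)
    (h1 : Function.Surjective (A.scalarSub 1)) {mu : ℂ} (hmu : 0 < mu.re) :
    Function.Surjective (A.scalarSub mu) := by
  set S := {lam : ℂ | Function.Surjective (A.scalarSub lam)}
  have step (lam : ℂ) (hlam : lam ∈ S) (nu : ℂ) (h : ‖lam - nu‖ < lam.re) : nu ∈ S :=
    hA.surjective_scalarSub_of_norm_sub_lt hlam h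
  set U := ⋃ lam ∈ S, ball lam lam.re
  set V := ⋃ nu ∈ Sᶜ, {lam : ℂ | ‖lam - nu‖ < lam.re}
  have hU : IsOpen U := isOpen_biUnion fun _ _ => isOpen_ball
  have hV : IsOpen V := isOpen_biUnion fun _ _ => isOpen_lt (by fun_prop) Complex.continuous_re
  have hUS : U ⊆ S := Set.iUnion₂_subset fun lam hlam nu hnu =>
    step lam hlam nu (by rwa [mem_ball, dist_comm, dist_eq_norm] at hnu)
  have hUV : Disjoint U V := by
    refine Set.disjoint_left.2 fun lam hlamU hlamV => ?_
    obtain ⟨nu, hnu, hlt⟩ := Set.mem_iUnion₂.1 hlamV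
    exact hnu (step lam (hUS hlamU) nu hlt)
  have hcover : {lam : ℂ | 0 < lam.re} ⊆ U ∪ V := by
    intro lam hlam
    by_cases h : lam ∈ S
    · exact Or.inl (Set.mem_biUnion h (mem_ball_self hlam))
    · exact Or.inr (Set.mem_biUnion h (by simpa using hlam))
  have hone : ({lam : ℂ | 0 < lam.re} ∩ U).Nonempty :=
    ⟨1, by simp, Set.mem_biUnion h1 (mem_ball_self (by simp))⟩
  exact hUS ((convex_halfSpace_re_gt 0).isPreconnected.subset_left_of_subset_union
    hU hV hUV hcover hone hmu)

end Hilbert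

end LinearPMap

open LinearPMap in
theorem stmt_5_general {H : Type*} [NormedAddCommGroup H] [InnerProductSpace ℂ H] [CompleteSpace H]
    (A : H →ₗ.[ℂ] H) :
    ((∀ x : A.domain, (inner ℂ (A x) (x : H) : ℂ).re ≤ 0) ∧
      (∀ y : H, ∃ x : A.domain, (x : H) - A x = y)) ↔
    (∀ lam : ℂ, 0 < lam.re →
      ∃ R : H →L[ℂ] H,
        (∀ h : H, ∃ hx : R h ∈ A.domain, lam • R h - A ⟨R h, hx⟩ = h) ∧
        (∀ x : A.domain, R (lam • (x : H) - A x) = (x : H)) ∧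
        ‖R‖ ≤ 1 / lam.re) := by
  constructor
  · rintro ⟨hA : A.IsDissipative, hran⟩ lam hlam
    have h1 : Function.Surjective (A.scalarSub 1) := fun y => by
      simpa only [scalarSub_apply, one_smul] using hran y
    exact hA.exists_resolvent hlam (hA.surjective_scalarSub_of_re_pos h1 hlam)
  · intro hres
    refine ⟨isDissipative_of_re_mul_norm_le fun t ht x => ?_, fun y => ?_⟩
    · obtain ⟨R, -, hR, hRnorm⟩ := hres t (by simpa using ht)
      simpa using re_mul_norm_le_of_leftInverse hR hRnorm (by simpa using ht) x
    · obtain ⟨R, hR, -, -⟩ := hres 1 (by simp)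
      obtain ⟨hx, hRy⟩ := hR y
      exact ⟨⟨R y, hx⟩, by simpa using hRy⟩

/-- Let `A` be a densely defined closed operator on a complex Hilbert space.  `A` is
m-dissipative (i.e. `Re⟨Ax, x⟩ ≤ 0` on `D(A)` and `Ran(1 − A) = H`) if and only if every
`λ` with `Re λ > 0` belongs to the resolvent set of `A` (so that the spectrum lies in the
closed left half-plane) and `‖(λ − A)⁻¹‖ ≤ 1 / Re λ` for all such `λ`. -/
theorem stmt_5 {H : Type*} [NormedAddCommGroup H] [InnerProductSpace ℂ H] [CompleteSpace H]
    (A : H →ₗ.[ℂ] H) (hdense : Dense (A.domain : Set H)) (hclosed : A.IsClosed) :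
    ((∀ x : A.domain, (inner ℂ (A x) (x : H) : ℂ).re ≤ 0) ∧
      (∀ y : H, ∃ x : A.domain, (x : H) - A x = y)) ↔
    (∀ lam : ℂ, 0 < lam.re →
      ∃ R : H →L[ℂ] H,
        (∀ h : H, ∃ hx : R h ∈ A.domain, lam • R h - A ⟨R h, hx⟩ = h) ∧
        (∀ x : A.domain, R (lam • (x : H) - A x) = (x : H)) ∧
        ‖R‖ ≤ 1 / lam.re) :=
  stmt_5_general A
end
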